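/- Let L_m = {e} ∪ {aⁿ x₁⋯x_m dⁿ | n ≥ 1, x_i ∈ {b,c}} and let G be any propagating 1-limited 0L system (single table, possibly several rules per letter, each step rewriting exactly one occurrence of each distinct letter present) with L(G) = L_m. Suppose the only rule of G with left side a is a → a^i for some fixed i ≥ 2. Then every word of L_m containing exactly one occurrence of a must be derived directly (in one step) from the axiom e, and hence G has at least 2^m rules with left side e. -/

import Mathlib

/-! Since `a → aⁱ` with `i ≥ 2` is the only rule for `a`, a step from a word containing `a`
strictly increases the number of `a`s. So a word of `L_m` with a single `a` has a predecessor in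
`L_m` without `a`, which can only be the axiom `e`. The `2^m` words `a x₁⋯x_m d` thus come from
`2^m` distinct rules `e → a x₁⋯x_m d`. -/

/-- One k-limited derivation step: for each letter x, exactly min(k, |v|_x) occurrences
of x in v are rewritten, each by some rule of R with left side x; the remaining
occurrences stay unchanged. -/
def klStep {V : Type*} [DecidableEq V] (k : ℕ) (R : Set (V × List V)) (v w : List V) : Prop :=
  ∃ (S : Finset (Fin v.length)) (f : Fin v.length → List V),
    (∀ x : V, (S.filter (fun i => v.get i = x)).card = min k (v.count x)) ∧
    (∀ i ∈ S, (v.get i, f i) ∈ R) ∧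
    (∀ i, i ∉ S → f i = [v.get i]) ∧
    w = (List.ofFn f).flatten

/-- Deterministic k-limited step with rule function P. -/
def detStep {V : Type*} [DecidableEq V] (k : ℕ) (P : V → List V) : List V → List V → Prop :=
  klStep k {p | p.2 = P p.1}

/-- The language generated from axiom ω by a step relation. -/
def lang {V : Type*} (step : List V → List V → Prop) (ω : List V) : Set (List V) :=
  {w | Relation.ReflTransGen step ω w}

inductive V5 : Type
  | a | b | c | d | e
deriving DecidableEq

open V5

/-- L_m = {e} ∪ {aⁿ w dⁿ | n ≥ 1, w ∈ {b,c}^m}. -/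
def Lm (m : ℕ) : Set (List V5) :=
  {[e]} ∪ {z | ∃ n ≥ 1, ∃ w : List V5,
    w.length = m ∧ (∀ x ∈ w, x = b ∨ x = c) ∧
    z = List.replicate n a ++ w ++ List.replicate n d}

theorem List.card_filter_get_eq_count {V : Type*} [DecidableEq V] (v : List V) (x : V) :
    (Finset.univ.filter (fun i : Fin v.length => v.get i = x)).card = v.count x :=
  Fin.card_filter_univ_eq_vector_get_eq_count x ⟨v, rfl⟩

section klStep

variable {V : Type*} [DecidableEq V] {k : ℕ} {R : Set (V × List V)}

theorem klStep_singleton_iff (hk : 0 < k) {x : V} {z : List V} :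
    klStep k R [x] z ↔ (x, z) ∈ R := by
  constructor
  · rintro ⟨S, f, hcard, hrule, -, rfl⟩
    have hS : S = Finset.univ := by
      have h := hcard x
      simp only [List.length_singleton, List.get_eq_getElem, List.getElem_singleton,
        Finset.filter_true, List.count_singleton_self] at h
      exact Finset.eq_univ_of_card S (by simp; omega)
    simpa [List.ofFn_succ] using hrule 0 (hS ▸ Finset.mem_univ 0)
  · intro h
    refine ⟨Finset.univ, fun _ => z, fun y => ?_, fun i _ => by simpa [Fin.fin_one_eq_zero i],
      fun i hi => absurd (Finset.mem_univ i) hi, by simp⟩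
    rw [List.card_filter_get_eq_count]
    by_cases hy : x = y <;> simp [hy]
    omega

theorem count_add_min_le_count_of_klStep {x : V} (hx : ∀ w, (x, w) ∈ R → 2 ≤ w.count x)
    {v z : List V} (h : klStep k R v z) : v.count x + min k (v.count x) ≤ z.count x := by
  obtain ⟨S, f, hcard, hrule, hkeep, rfl⟩ := h
  have hpoint : ∀ j, ((if v.get j = x then 1 else 0) + if j ∈ S ∧ v.get j = x then 1 else 0)
      ≤ (f j).count x := by
    intro j
    by_cases hj : j ∈ S
    · by_cases hjx : v.get j = x
      · rw [if_pos hjx, if_pos ⟨hj, hjx⟩]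
        exact hx _ (hjx ▸ hrule j hj)
      · rw [if_neg hjx, if_neg fun h => hjx h.2]
        exact Nat.zero_le _
    · rw [hkeep j hj, List.count_singleton', if_neg fun h : j ∈ S ∧ _ => hj h.1, add_zero]
  calc v.count x + min k (v.count x)
      = ∑ j, ((if v.get j = x then 1 else 0) + if j ∈ S ∧ v.get j = x then 1 else 0) := by
        rw [Finset.sum_add_distrib, Finset.sum_boole, Finset.sum_boole, ← hcard,
          List.card_filter_get_eq_count]
        congr 2
        ext j
        simp
    _ ≤ ∑ j, (f j).count x := Finset.sum_le_sum fun j _ => hpoint j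
    _ = ((List.ofFn f).flatten).count x := by
        rw [List.count_flatten, List.map_ofFn, List.sum_ofFn]; rfl

end klStep

def bcWord {m : ℕ} (g : Fin m → Bool) : List V5 :=
  List.ofFn fun j => if g j then b else c

theorem bcWord_injective {m : ℕ} : Function.Injective (bcWord (m := m)) := by
  intro g₁ g₂ h
  funext j
  have hj := congrFun (List.ofFn_injective h) j
  cases h₁ : g₁ j <;> cases h₂ : g₂ j <;> simp_all

theorem a_not_mem_bcWord {m : ℕ} (g : Fin m → Bool) : a ∉ bcWord g := by
  simp only [bcWord, List.mem_ofFn, not_exists]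
  intro j
  cases g j <;> simp

theorem a_cons_bcWord_mem_Lm {m : ℕ} (g : Fin m → Bool) : a :: (bcWord g ++ [d]) ∈ Lm m := by
  refine Or.inr ⟨1, le_rfl, bcWord g, by simp [bcWord], fun x hx => ?_, by simp⟩
  obtain ⟨j, rfl⟩ := List.mem_ofFn.mp hx
  cases g j <;> simp

theorem count_a_cons_bcWord {m : ℕ} (g : Fin m → Bool) :
    (a :: (bcWord g ++ [d])).count a = 1 := by
  simp [List.count_eq_zero.mpr (a_not_mem_bcWord g)]

theorem eq_singleton_e_or_a_mem_of_mem_Lm {m : ℕ} {u : List V5} (hu : u ∈ Lm m) :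
    u = [e] ∨ a ∈ u := by
  rcases hu with rfl | ⟨n, hn, w, -, -, rfl⟩
  · exact Or.inl rfl
  · exact Or.inr (List.mem_append_left _ (List.mem_append_left _
      (List.mem_replicate.mpr ⟨by omega, rfl⟩)))

theorem stmt9_general (m : ℕ) (R : Finset (V5 × List V5))
    (hgen : lang (klStep 1 (↑R : Set (V5 × List V5))) [e] = Lm m)
    (harule : ∃ i ≥ 2, ∀ w : List V5, (a, w) ∈ R ↔ w = List.replicate i a) :
    (∀ z ∈ Lm m, z.count a = 1 → klStep 1 (↑R : Set (V5 × List V5)) [e] z) ∧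
    2 ^ m ≤ (R.filter (fun p => p.1 = e)).card := by
  obtain ⟨i, hi, ha⟩ := harule
  have hgrow {u z : List V5} (hu : a ∈ u) (h : klStep 1 (↑R : Set (V5 × List V5)) u z) :
      1 < z.count a := by
    have := count_add_min_le_count_of_klStep (x := a)
      (fun w hw => by rwa [(ha w).1 hw, List.count_replicate_self]) h
    have := List.count_pos_iff.mpr hu
    omega
  have hdirect : ∀ z ∈ Lm m, z.count a = 1 → klStep 1 (↑R : Set (V5 × List V5)) [e] z := by
    intro z hz hza
    rw [← hgen] at hz
    rcases hz.cases_tail with rfl | ⟨u, hu, hstep⟩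
    · simp at hza
    · rcases eq_singleton_e_or_a_mem_of_mem_Lm (hgen ▸ hu : u ∈ Lm m) with rfl | hau
      · exact hstep
      · exact absurd hza (hgrow hau hstep).ne'
  refine ⟨hdirect, ?_⟩
  calc 2 ^ m = (Finset.univ : Finset (Fin m → Bool)).card := by simp
    _ ≤ _ := Finset.card_le_card_of_injOn (fun g => (e, a :: (bcWord g ++ [d])))
        (fun g _ => Finset.mem_filter.mpr ⟨(klStep_singleton_iff one_pos).mp
          (hdirect _ (a_cons_bcWord_mem_Lm g) (count_a_cons_bcWord g)), rfl⟩)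
        (fun g₁ _ g₂ _ h => bcWord_injective (by simpa using h))

/-- If a 1ℓP0L system with rule set R generates L_m, is propagating, and its only rule
with left side a is a → a^i for a fixed i ≥ 2, then every word of L_m with exactly one
occurrence of a is derived directly (in one step) from the axiom e, and R contains at
least 2^m rules with left side e. -/
theorem stmt9 (m : ℕ) (hm : 1 ≤ m) (R : Finset (V5 × List V5))
    (hcomplete : ∀ x : V5, ∃ w, (x, w) ∈ R)
    (hprop : ∀ p ∈ R, p.2 ≠ ([] : List V5))
    (hgen : lang (klStep 1 (↑R : Set (V5 × List V5))) [e] = Lm m)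
    (harule : ∃ i ≥ 2, ∀ w : List V5, (a, w) ∈ R ↔ w = List.replicate i a) :
    (∀ z ∈ Lm m, z.count a = 1 → klStep 1 (↑R : Set (V5 × List V5)) [e] z) ∧
    2 ^ m ≤ (R.filter (fun p => p.1 = e)).card :=
  stmt9_general m R hgen harule
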